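/- arXiv:1205.0735 — 5 statements merged into one kernel-verified Lean document; each statement's English description precedes it below -/
import Mathlib

section
/- Define integers M(n,k) for n, k ≥ 0 by M(0,0) = 1, M(0,k) = 0 for k ≥ 1, M(n,k) = 0 for k < 0, and the recurrence M(n+1,k) = (n+2k+2)·M(n,k) + (n−2k+2)·M(n,k−1). Let L be the operator sending a function f to the derivative of (sec·f), i.e. L(f)(x) = d/dx (sec(x)·f(x)). Then for every n ≥ 0 and every real x with cos(x) ≠ 0, the n-th iterate of L applied to sec satisfies L^n(sec)(x) = ∑_{k=0}^{⌊n/2⌋} M(n,k) · tan(x)^{n−2k} · sec(x)^{n+2k+1}. -/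
/-! With `t = tan` and `s = sec` one has `t' = s²` and `s' = s t`, so `L` maps `t^a s^b` to
`a t^(a-1) s^(b+3) + (b+1) t^(a+1) s^(b+1)`. Collecting coefficients of
`t^(n-2k) s^(n+2k+1)` turns this into exactly the defining recurrence of `M`; the terms with
`2k > n`, where the exponent `n - 2k` would be truncated, all have `M(n,k) = 0`. -/

/-- The coefficients M(n,k): M(0,0)=1, M(0,k)=0 for k ≠ 0 (in particular k ≥ 1 and k < 0),
and M(n+1,k) = (n+2k+2)·M(n,k) + (n−2k+2)·M(n,k−1). -/
def M : ℕ → ℤ → ℤ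
  | 0, k => if k = 0 then 1 else 0
  | n + 1, k => ((n : ℤ) + 2 * k + 2) * M n k + ((n : ℤ) - 2 * k + 2) * M n (k - 1)

/-- sec(x) = 1/cos(x). -/
noncomputable def sec (x : ℝ) : ℝ := (Real.cos x)⁻¹

/-- The operator L sending f to the derivative of sec·f. -/
noncomputable def L (f : ℝ → ℝ) : ℝ → ℝ := deriv (fun x => sec x * f x)

open Finset Real

theorem M_eq_zero_of_neg {n : ℕ} {k : ℤ} (hk : k < 0) : M n k = 0 := by
  induction n generalizing k with
  | zero => rw [M, if_neg hk.ne]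
  | succ n ih => simp [M, ih hk, ih (show k - 1 < 0 by omega)]

theorem M_eq_zero_of_lt {n : ℕ} {k : ℤ} (hk : (n : ℤ) < 2 * k) : M n k = 0 := by
  induction n generalizing k with
  | zero => rw [M, if_neg (by omega)]
  | succ n ih =>
    push_cast at hk
    rw [M, ih (by omega)]
    rcases lt_or_ge (n : ℤ) (2 * (k - 1)) with h | h
    · simp [ih h]
    · simp [show (n : ℤ) - 2 * k + 2 = 0 by omega]

theorem sum_range_eq_sum_range_half {R : Type*} [AddCommMonoid R] {n N : ℕ} (hN : n / 2 < N)
    (f : ℕ → R) (hf : ∀ k : ℕ, M n k = 0 → f k = 0) :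
    ∑ k ∈ range N, f k = ∑ k ∈ range (n / 2 + 1), f k := by
  refine (sum_subset (fun k hk ↦ ?_) fun k _ hk ↦ hf k (M_eq_zero_of_lt ?_)).symm
  · simp only [mem_range] at hk ⊢; omega
  · simp only [mem_range] at hk; omega

def tanSecPoly {R : Type*} [CommRing R] (n : ℕ) (t s : R) : R :=
  ∑ k ∈ range (n / 2 + 1), (M n k : R) * t ^ (n - 2 * k) * s ^ (n + 2 * k + 1)

/-- The right side is `D (s * tanSecPoly n t s)` for the derivation `D` with `D t = s²` and
`D s = s t`, written termwise as differentiation produces it. -/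
theorem tanSecPoly_succ {R : Type*} [CommRing R] (n : ℕ) (t s : R) :
    tanSecPoly (n + 1) t s = ∑ k ∈ range (n / 2 + 1), (M n k : R) *
      (((n - 2 * k : ℕ) : R) * t ^ (n - 2 * k - 1) * s ^ (n + 2 * k + 2 + 2) +
        ((n + 2 * k + 2 : ℕ) : R) * t ^ (n - 2 * k + 1) * s ^ (n + 2 * k + 2)) := by
  set A : ℕ → R := fun k ↦ (n + 2 * k + 2 : R) * M n k * t ^ (n + 1 - 2 * k) *
    s ^ (n + 2 * k + 2)
  set B : ℕ → R := fun k ↦ (n - 2 * k + 2 : R) * M n (k - 1) * t ^ (n + 1 - 2 * k) *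
    s ^ (n + 2 * k + 2)
  set B' : ℕ → R := fun k ↦ (n - 2 * k : R) * M n k * t ^ (n - 2 * k - 1) *
    s ^ (n + 2 * k + 4)
  have hB : ∑ k ∈ range (n + 2), B k = ∑ k ∈ range (n + 1), B' k := by
    rw [sum_range_succ']
    simp only [B, B', CharP.cast_eq_zero, Nat.cast_add, Nat.cast_one, M_eq_zero_of_neg
      (show (0 : ℤ) - 1 < 0 by omega), Int.cast_zero, mul_zero, zero_mul, add_zero]
    refine sum_congr rfl fun k _ ↦ ?_
    rw [show n + 1 - 2 * (k + 1) = n - 2 * k - 1 by omega, add_sub_cancel_right]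
    ring_nf
  calc tanSecPoly (n + 1) t s = ∑ k ∈ range (n + 2), (A k + B k) := by
        rw [tanSecPoly, ← sum_range_eq_sum_range_half (N := n + 2) (by omega) _
          fun k hk ↦ by simp [hk]]
        refine sum_congr rfl fun k _ ↦ ?_
        simp only [A, B, M]
        push_cast
        ring_nf
    _ = ∑ k ∈ range (n / 2 + 1), (A k + B' k) := by
        rw [sum_add_distrib, hB, sum_add_distrib,
          sum_range_eq_sum_range_half (n := n) (by omega) A fun k hk ↦ by simp [A, hk],
          sum_range_eq_sum_range_half (n := n) (by omega) B' fun k hk ↦ by simp [B', hk]]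
    _ = _ := by
        refine sum_congr rfl fun k hk ↦ ?_
        have hk : 2 * k ≤ n := by rw [mem_range] at hk; omega
        simp only [A, B']
        rw [Nat.cast_sub hk, show n + 1 - 2 * k = n - 2 * k + 1 by omega]
        push_cast
        ring

theorem hasDerivAt_sec {x : ℝ} (hx : cos x ≠ 0) : HasDerivAt sec (sec x * tan x) x := by
  refine ((hasDerivAt_cos x).inv hx).congr_deriv ?_
  rw [sec, tan_eq_sin_div_cos]
  field_simp

theorem hasDerivAt_tan_pow_mul_sec_pow {x : ℝ} (hx : cos x ≠ 0) (a b : ℕ) :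
    HasDerivAt (fun y ↦ tan y ^ a * sec y ^ b)
      (a * tan x ^ (a - 1) * sec x ^ (b + 2) + b * tan x ^ (a + 1) * sec x ^ b) x := by
  have hsec_sq : 1 / cos x ^ 2 = sec x ^ 2 := by rw [sec, one_div, inv_pow]
  refine (((hasDerivAt_tan hx).fun_pow a).mul ((hasDerivAt_sec hx).fun_pow b)).congr_deriv ?_
  rw [hsec_sq]
  rcases b with _ | b
  · simp
  · push_cast
    ring

theorem hasDerivAt_sec_mul_tanSecPoly {x : ℝ} (hx : cos x ≠ 0) (n : ℕ) :
    HasDerivAt (fun y ↦ sec y * tanSecPoly n (tan y) (sec y))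
      (tanSecPoly (n + 1) (tan x) (sec x)) x := by
  have hfun : (fun y ↦ sec y * tanSecPoly n (tan y) (sec y)) =
      fun y ↦ ∑ k ∈ range (n / 2 + 1), (M n k : ℝ) *
        (tan y ^ (n - 2 * k) * sec y ^ (n + 2 * k + 2)) := by
    ext y
    rw [tanSecPoly, mul_sum]
    exact sum_congr rfl fun k _ ↦ by ring
  rw [hfun, tanSecPoly_succ]
  exact HasDerivAt.fun_sum fun k _ ↦ (hasDerivAt_tan_pow_mul_sec_pow hx _ _).const_mul _

theorem iterate_L_sec (n : ℕ) (x : ℝ) (hx : Real.cos x ≠ 0) :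
    L^[n] sec x =
      ∑ k ∈ Finset.range (n / 2 + 1),
        (M n k : ℝ) * Real.tan x ^ (n - 2 * k) * sec x ^ (n + 2 * k + 1) := by
  change L^[n] sec x = tanSecPoly n (tan x) (sec x)
  induction n generalizing x with
  | zero => simp [tanSecPoly, M]
  | succ n ih =>
    have hL : L^[n] sec =ᶠ[nhds x] fun y ↦ tanSecPoly n (tan y) (sec y) :=
      (continuous_cos.continuousAt.eventually_ne hx).mono ih
    rw [Function.iterate_succ_apply', L,
      Filter.EventuallyEq.deriv_eq (hL.mono fun y hy ↦ congrArg (sec y * ·) hy)]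
    exact (hasDerivAt_sec_mul_tanSecPoly hx n).deriv
end

section
/- Define integers M(n,k) for n, k ≥ 0 by M(0,0) = 1, M(0,k) = 0 for k ≥ 1, M(n,k) = 0 for k < 0, and the recurrence M(n+1,k) = (n+2k+2)·M(n,k) + (n−2k+2)·M(n,k−1). Then for all n ≥ 0 and 0 ≤ k ≤ ⌊n/2⌋, M(n,k) = n! · C(n+1, 2k+1). -/
/-- `Nat.choose_succ_right_eq` over `ℤ`, where it needs no hypothesis `k ≤ n`. -/
theorem Nat.cast_choose_succ_mul (n k : ℕ) :
    (n.choose (k + 1) : ℤ) * (k + 1) = n.choose k * ((n : ℤ) - k) := by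
  rcases le_or_gt k n with hkn | hnk
  · have h := Nat.choose_succ_right_eq n k
    zify [hkn] at h
    exact h
  · simp [Nat.choose_eq_zero_of_lt hnk, Nat.choose_eq_zero_of_lt (hnk.trans (Nat.lt_succ_self k))]

theorem Nat.add_mul_choose_add_two_add_sub_mul_choose (m i : ℕ) :
    ((m : ℤ) + i + 2) * m.choose (i + 2) + ((m : ℤ) - i) * m.choose i
      = m * (m + 1).choose (i + 2) := by
  have h₂ := Nat.cast_choose_succ_mul m (i + 1)
  have h₁ := Nat.cast_choose_succ_mul m i
  have hPascal : ((m + 1).choose (i + 2) : ℤ) = m.choose (i + 1) + m.choose (i + 2) := by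
    exact_mod_cast Nat.choose_succ_succ m (i + 1)
  push_cast at h₂ h₁
  rw [hPascal]
  linear_combination h₂ - h₁

theorem M_of_neg (n : ℕ) {k : ℤ} (hk : k < 0) : M n k = 0 := by
  induction n generalizing k with
  | zero => simp [M, hk.ne]
  | succ n ih => simp [M, ih hk, ih (show k - 1 < 0 by omega)]

theorem M_eq_factorial_choose_general (n k : ℕ) :
    M n k = (n.factorial : ℤ) * ((n + 1).choose (2 * k + 1)) := by
  induction n generalizing k with
  | zero =>
    rcases k with _ | k
    · simp [M]
    · simp [M, Nat.choose_eq_zero_of_lt (show 1 < 2 * (k + 1) + 1 by omega),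
        Nat.cast_add_one_ne_zero]
  | succ n ih =>
    rcases k with _ | j
    · rw [M, ih 0, M_of_neg n (by norm_num), Nat.factorial_succ]
      push_cast [Nat.choose_one_right]
      ring
    · have hj : ((j + 1 : ℕ) : ℤ) - 1 = (j : ℕ) := by push_cast; ring
      have key := Nat.add_mul_choose_add_two_add_sub_mul_choose (n + 1) (2 * j + 1)
      rw [M, hj, ih (j + 1), ih j, Nat.factorial_succ]
      push_cast at key ⊢
      linear_combination (n.factorial : ℤ) * key

theorem M_eq_factorial_choose (n k : ℕ) (hk : k ≤ n / 2) :
    M n k = (n.factorial : ℤ) * ((n + 1).choose (2 * k + 1)) :=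
  M_eq_factorial_choose_general n k
end

section
/- Let L be the operator sending a function f to the derivative of (sec·f), i.e. L(f)(x) = d/dx (sec(x)·f(x)). Then for every natural number n ≥ 0 and every real x with cos(x) ≠ 0, L^n(sec)(x) = ∑_{k=0}^{⌊n/2⌋} n! · C(n+1, 2k+1) · tan(x)^{n−2k} · sec(x)^{n+2k+1}. -/
open Real Finset Topology
open scoped Nat

theorem one_add_pow_sub_sub_one_pow {R : Type*} [CommRing R] (u : R) (n : ℕ) :
    (1 + u) ^ (n + 1) - (u - 1) ^ (n + 1) =
      2 * ∑ k ∈ range (n / 2 + 1), ((n + 1).choose (2 * k + 1) : R) * u ^ (n - 2 * k) := by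
  set F : ℕ → R := fun j => (1 - (-1) ^ j) * u ^ (n + 1 - j) * (n + 1).choose j
  have hF : (1 + u) ^ (n + 1) - (u - 1) ^ (n + 1) = ∑ j ∈ range (n + 2), F j := by
    rw [add_pow, show u - 1 = -1 + u by ring, add_pow, ← sum_sub_distrib]
    exact sum_congr rfl fun j _ => by simp only [F, one_pow]; ring
  have hinj : Set.InjOn (fun k => 2 * k + 1) (range (n / 2 + 1)) := fun a _ b _ h => by
    simp only at h; omega
  rw [hF, mul_sum]
  calc ∑ j ∈ range (n + 2), F j
      = ∑ j ∈ (range (n / 2 + 1)).image (fun k => 2 * k + 1), F j := by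
        refine (sum_subset (fun j hj => ?_) fun j hj hj' => ?_).symm
        · obtain ⟨k, hk, rfl⟩ := mem_image.mp hj
          simp only [mem_range] at hk ⊢; omega
        · have heven : Even j := by
            by_contra hodd
            obtain ⟨k, rfl⟩ := Nat.not_even_iff_odd.mp hodd
            exact hj' (mem_image.mpr ⟨k, by simp only [mem_range] at hj ⊢; omega, rfl⟩)
          simp only [F, heven.neg_one_pow, sub_self, zero_mul]
    _ = ∑ k ∈ range (n / 2 + 1), F (2 * k + 1) := sum_image hinj
    _ = _ := sum_congr rfl fun k hk => by
        have : n + 1 - (2 * k + 1) = n - 2 * k := by omega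
        simp only [F, (odd_two_mul_add_one k).neg_one_pow, this]; ring

theorem HasDerivAt.inv_pow_succ {𝕜 : Type*} [NontriviallyNormedField 𝕜] {f : 𝕜 → 𝕜}
    {f' x : 𝕜} (hf : HasDerivAt f f' x) (hx : f x ≠ 0) (n : ℕ) :
    HasDerivAt (fun y => (f y ^ (n + 1))⁻¹) (-(n + 1) * f' * (f x ^ (n + 2))⁻¹) x := by
  refine ((hf.pow (n + 1)).inv (pow_ne_zero _ hx)).congr_deriv ?_
  simp only [Pi.pow_apply]
  field_simp
  push_cast
  ring

noncomputable def derivInvOneSubSq (n : ℕ) (u : ℝ) : ℝ :=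
  n ! / 2 * (((1 - u) ^ (n + 1))⁻¹ + (-1) ^ n * ((1 + u) ^ (n + 1))⁻¹)

theorem hasDerivAt_derivInvOneSubSq (n : ℕ) {u : ℝ} (hu₁ : 1 - u ≠ 0) (hu₂ : 1 + u ≠ 0) :
    HasDerivAt (derivInvOneSubSq n) (derivInvOneSubSq (n + 1) u) u := by
  have h₁ := ((hasDerivAt_id u).const_sub 1).inv_pow_succ hu₁ n
  have h₂ := ((hasDerivAt_id u).const_add 1).inv_pow_succ hu₂ n
  refine ((h₁.add (h₂.const_mul ((-1) ^ n))).const_mul (n ! / 2 : ℝ)).congr_deriv ?_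
  simp only [derivInvOneSubSq, Nat.factorial_succ, id]
  push_cast
  ring

theorem one_sub_sin_mul_one_add_sin (x : ℝ) : (1 - sin x) * (1 + sin x) = cos x ^ 2 := by
  linear_combination -(sin_sq_add_cos_sq x)

theorem one_sub_sin_ne_zero_and_one_add_sin_ne_zero {x : ℝ} (hx : cos x ≠ 0) :
    1 - sin x ≠ 0 ∧ 1 + sin x ≠ 0 :=
  mul_ne_zero_iff.mp (one_sub_sin_mul_one_add_sin x ▸ pow_ne_zero 2 hx)

theorem L_apply_of_eventuallyEq {f h : ℝ → ℝ} {h' x : ℝ} (hx : cos x ≠ 0)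
    (hf : f =ᶠ[𝓝 x] fun y => cos y * h (sin y)) (hh : HasDerivAt h h' (sin x)) :
    L f x = cos x * h' := by
  have hsec : (fun y => sec y * f y) =ᶠ[𝓝 x] h ∘ sin := by
    filter_upwards [hf, continuous_cos.continuousAt.eventually_ne hx] with y hfy hy
    simp [sec, hfy, hy]
  rw [L, hsec.deriv_eq, (hh.comp x (hasDerivAt_sin x)).deriv, mul_comm]

theorem iterate_L_sec_eq (n : ℕ) {x : ℝ} (hx : cos x ≠ 0) :
    L^[n] sec x = cos x * derivInvOneSubSq n (sin x) := by
  induction n generalizing x with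
  | zero =>
    obtain ⟨h₁, h₂⟩ := one_sub_sin_ne_zero_and_one_add_sin_ne_zero hx
    simp only [Function.iterate_zero, id, sec, derivInvOneSubSq, Nat.factorial_zero, Nat.cast_one,
      zero_add, pow_one, pow_zero]
    field_simp
    linear_combination 2 * one_sub_sin_mul_one_add_sin x
  | succ n ih =>
    obtain ⟨h₁, h₂⟩ := one_sub_sin_ne_zero_and_one_add_sin_ne_zero hx
    rw [Function.iterate_succ_apply']
    refine L_apply_of_eventuallyEq hx ?_ (hasDerivAt_derivInvOneSubSq n h₁ h₂)
    filter_upwards [continuous_cos.continuousAt.eventually_ne hx] with y hy using ih hy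

theorem cos_mul_derivInvOneSubSq_sin (n : ℕ) {x : ℝ} (hx : cos x ≠ 0) :
    cos x * derivInvOneSubSq n (sin x) = ∑ k ∈ range (n / 2 + 1),
      (n ! : ℝ) * ((n + 1).choose (2 * k + 1)) * tan x ^ (n - 2 * k) * sec x ^ (n + 2 * k + 1) := by
  have hterm : ∀ k ∈ range (n / 2 + 1), (n ! : ℝ) * ((n + 1).choose (2 * k + 1)) *
      tan x ^ (n - 2 * k) * sec x ^ (n + 2 * k + 1) =
      n ! * sec x ^ (2 * n + 1) * (((n + 1).choose (2 * k + 1) : ℝ) * sin x ^ (n - 2 * k)) := by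
    intro k hk
    have : 2 * n + 1 = (n - 2 * k) + (n + 2 * k + 1) := by simp only [mem_range] at hk; omega
    rw [tan_eq_sin_div_cos, div_eq_mul_inv, mul_pow, this, pow_add, sec]
    ring
  obtain ⟨h₁, h₂⟩ := one_sub_sin_ne_zero_and_one_add_sin_ne_zero hx
  rw [sum_congr rfl hterm, ← mul_sum, ← mul_div_cancel_left₀ (∑ k ∈ _, _) two_ne_zero,
    ← one_add_pow_sub_sub_one_pow, derivInvOneSubSq, sec]
  field_simp
  have hcos : ((1 - sin x) * (1 + sin x)) ^ (n + 1) * (1 / cos x) ^ (2 * n + 1) = cos x := by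
    rw [one_sub_sin_mul_one_add_sin, ← pow_mul, show 2 * (n + 1) = 2 * n + 1 + 1 by ring,
      pow_succ', mul_assoc, ← mul_pow, mul_one_div_cancel hx, one_pow, mul_one]
  have hneg : (sin x - 1) ^ (n + 1) = -((1 - sin x) ^ (n + 1) * (-1) ^ n) := by
    rw [← neg_sub 1 (sin x), neg_pow, pow_succ]
    ring
  rw [hneg, ← mul_pow, hcos]
  ring

theorem iterate_L_sec_explicit (n : ℕ) (x : ℝ) (hx : Real.cos x ≠ 0) :
    L^[n] sec x =
      ∑ k ∈ Finset.range (n / 2 + 1),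
        (n.factorial : ℝ) * ((n + 1).choose (2 * k + 1)) *
          Real.tan x ^ (n - 2 * k) * sec x ^ (n + 2 * k + 1) := by
  rw [iterate_L_sec_eq n hx, cos_mul_derivInvOneSubSq_sin n hx]
end

section
/- Let L be the operator sending a function f to the derivative of (sec·f), i.e. L(f)(x) = d/dx (sec(x)·f(x)). Then for every natural number m ≥ 0 and every real x with cos(x) ≠ 0, L^{2m}(tan)(x) = (2m)! · ∑_{k=0}^{m} C(2m+1, 2k) · tan(x)^{2m−2k+1} · (1 + tan(x)^2)^{m+k}. -/
/-!
The functions `u₊ = (1 - sin)⁻¹` and `u₋ = (-1 - sin)⁻¹` both solve `u' = cos · u²`, hence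
`L (cos · uⁿ⁺¹) = (n + 1) · cos · uⁿ⁺²`, and `tan = cos · (u₊ + u₋) / 2`. So
`Lⁿ tan = n! · cos · (u₊ⁿ⁺¹ + u₋ⁿ⁺¹) / 2 = n! · secⁿ · ((tan + sec)ⁿ⁺¹ + (tan - sec)ⁿ⁺¹) / 2`,
and for `n = 2m` the even terms of the two binomial expansions give the formula,
since `sec² = 1 + tan²`.
-/

open Finset Real

theorem Finset.sum_range_two_mul {M : Type*} [AddCommMonoid M] (f : ℕ → M) (n : ℕ) :
    ∑ i ∈ range (2 * n), f i = ∑ k ∈ range n, (f (2 * k) + f (2 * k + 1)) := by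
  induction n with
  | zero => simp
  | succ n ih =>
    rw [mul_add, mul_one, sum_range_succ, sum_range_succ, ih, sum_range_succ _ n, add_assoc]

theorem add_pow_add_sub_pow_two_mul_add_one {R : Type*} [CommRing R] (x y : R) (m : ℕ) :
    (x + y) ^ (2 * m + 1) + (x - y) ^ (2 * m + 1) =
      2 * ∑ k ∈ range (m + 1),
        ((2 * m + 1).choose (2 * k) : R) * x ^ (2 * m + 1 - 2 * k) * y ^ (2 * k) := by
  rw [add_comm x, sub_eq_neg_add, add_pow, add_pow, ← sum_add_distrib,
    show 2 * m + 1 + 1 = 2 * (m + 1) by ring, sum_range_two_mul, mul_sum]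
  refine sum_congr rfl fun k _ => ?_
  rw [(even_two_mul k).neg_pow, (odd_two_mul_add_one k).neg_pow]
  ring

theorem sin_ne_of_cos_ne_zero {c x : ℝ} (hc : c ^ 2 = 1) (hx : cos x ≠ 0) : sin x ≠ c := by
  intro h
  apply hx
  apply pow_eq_zero_iff two_ne_zero |>.1
  linear_combination cos_sq_add_sin_sq x - hc - (c + sin x) * h

theorem hasDerivAt_inv_sub_sin (c : ℝ) {x : ℝ} (hx : sin x ≠ c) :
    HasDerivAt (fun y => (c - sin y)⁻¹) (cos x * (c - sin x)⁻¹ ^ 2) x := by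
  have hc : c - sin x ≠ 0 := sub_ne_zero.2 hx.symm
  refine (((hasDerivAt_sin x).const_sub c).fun_inv hc).congr_deriv ?_
  rw [neg_neg, inv_pow, div_eq_mul_inv]

theorem inv_sub_sin_eq_sec_mul {c x : ℝ} (hc : c ^ 2 = 1) (hx : cos x ≠ 0) :
    (c - sin x)⁻¹ = sec x * (tan x + c * sec x) := by
  have hcs : c - sin x ≠ 0 := sub_ne_zero.2 (sin_ne_of_cos_ne_zero hc hx).symm
  rw [sec, tan_eq_sin_div_cos]
  field_simp
  linear_combination -hc + cos_sq_add_sin_sq x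

theorem sec_sq_eq_one_add_tan_sq {x : ℝ} (hx : cos x ≠ 0) : sec x ^ 2 = 1 + tan x ^ 2 := by
  rw [sec, inv_pow, ← inv_one_add_tan_sq hx, inv_inv]

theorem tan_eq_cos_mul :
    tan = fun y => cos y * (2⁻¹ * (1 - sin y)⁻¹ + 2⁻¹ * (-1 - sin y)⁻¹) := by
  funext y
  rw [tan_eq_sin_div_cos]
  by_cases hy : cos y = 0
  · simp [hy] -- both sides are `0`, as `sin y / 0 = 0`
  have h1 : 1 - sin y ≠ 0 := sub_ne_zero.2 (sin_ne_of_cos_ne_zero (one_pow 2) hy).symm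
  have h2 : -1 - sin y ≠ 0 := sub_ne_zero.2 (sin_ne_of_cos_ne_zero (by norm_num) hy).symm
  field_simp
  linear_combination 2 * sin y * cos_sq_add_sin_sq y

theorem iterate_L_cos_mul_add {u v : ℝ → ℝ}
    (hu : ∀ y, cos y ≠ 0 → HasDerivAt u (cos y * u y ^ 2) y)
    (hv : ∀ y, cos y ≠ 0 → HasDerivAt v (cos y * v y ^ 2) y) (a b : ℝ) (n : ℕ) {x : ℝ}
    (hx : cos x ≠ 0) :
    L^[n] (fun y => cos y * (a * u y + b * v y)) x =
      n.factorial * cos x * (a * u x ^ (n + 1) + b * v x ^ (n + 1)) := by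
  induction n generalizing x with
  | zero => simp
  | succ n ih =>
    have hloc : (fun y => sec y * L^[n] (fun y => cos y * (a * u y + b * v y)) y) =ᶠ[nhds x]
        fun y => n.factorial * (a * u y ^ (n + 1) + b * v y ^ (n + 1)) := by
      filter_upwards [continuous_cos.continuousAt.eventually_ne hx] with y hy
      rw [ih hy, sec]
      field_simp
    have hderiv := (((hu x hx).fun_pow (n + 1)).const_mul a |>.add
      (((hv x hx).fun_pow (n + 1)).const_mul b)).const_mul (n.factorial : ℝ)
    rw [Function.iterate_succ_apply', L, hloc.deriv_eq]
    refine hderiv.deriv.trans ?_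
    rw [Nat.factorial_succ, Nat.add_sub_cancel]
    push_cast
    ring

theorem iterate_L_tan (n : ℕ) {x : ℝ} (hx : cos x ≠ 0) :
    L^[n] tan x =
      n.factorial * cos x * (2⁻¹ * (1 - sin x)⁻¹ ^ (n + 1) + 2⁻¹ * (-1 - sin x)⁻¹ ^ (n + 1)) := by
  rw [tan_eq_cos_mul]
  exact iterate_L_cos_mul_add
    (fun y hy => hasDerivAt_inv_sub_sin 1 (sin_ne_of_cos_ne_zero (one_pow 2) hy))
    (fun y hy => hasDerivAt_inv_sub_sin (-1) (sin_ne_of_cos_ne_zero (by norm_num) hy)) _ _ n hx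

theorem iterate_L_tan_eq_sec (n : ℕ) {x : ℝ} (hx : cos x ≠ 0) :
    L^[n] tan x =
      n.factorial * sec x ^ n * ((tan x + sec x) ^ (n + 1) + (tan x - sec x) ^ (n + 1)) / 2 := by
  have hcos : cos x * sec x = 1 := mul_inv_cancel₀ hx
  rw [iterate_L_tan n hx, inv_sub_sin_eq_sec_mul (one_pow 2) hx,
    inv_sub_sin_eq_sec_mul (by norm_num) hx, mul_pow, mul_pow, pow_succ' (sec x)]
  linear_combination
    (n.factorial * sec x ^ n * ((tan x + sec x) ^ (n + 1) + (tan x - sec x) ^ (n + 1)) / 2) * hcos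

theorem iterate_L_tan_even (m : ℕ) (x : ℝ) (hx : Real.cos x ≠ 0) :
    L^[2 * m] Real.tan x =
      ((2 * m).factorial : ℝ) *
        ∑ k ∈ Finset.range (m + 1),
          ((2 * m + 1).choose (2 * k)) *
            Real.tan x ^ (2 * m + 1 - 2 * k) * (1 + Real.tan x ^ 2) ^ (m + k) := by
  rw [iterate_L_tan_eq_sec _ hx, add_pow_add_sub_pow_two_mul_add_one, mul_div_assoc,
    mul_div_cancel_left₀ _ two_ne_zero, mul_assoc, mul_sum, ← sec_sq_eq_one_add_tan_sq hx]
  refine congrArg _ (sum_congr rfl fun k _ => ?_)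
  rw [← pow_mul, mul_add, pow_add]
  ring
end

section
/- Define a sequence of real polynomials Q_n in one variable y by Q_0(y) = 1 and Q_{n+1}(y) = (1 + y^2)·Q_n'(y) + y·Q_n(y), where Q_n' denotes the formal derivative. Then for every natural number n ≥ 0 and every real x with cos(x) ≠ 0, the n-th derivative of the secant function satisfies (d/dx)^n sec(x) = sec(x)·Q_n(tan(x)). -/
/-- Hoffman's derivative polynomials for secant: Q₀ = 1, Q_{n+1} = (1+y²)·Qₙ' + y·Qₙ. -/
noncomputable def Q : ℕ → Polynomial ℝ
  | 0 => 1
  | n + 1 => (1 + Polynomial.X ^ 2) * Polynomial.derivative (Q n) + Polynomial.X * Q n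

/-!
Since `sec' = sec · tan` and `tan' = 1 + tan²`, differentiating `sec · P(tan)` for a polynomial
`P` gives `sec · ((1 + y²) P' + y P)(tan)`, which is the recursion defining `Q`. The induction on
`n` goes through because the formula holds on the whole open set `cos ≠ 0` around `x`.
-/

open Polynomial Real

theorem hasDerivAt_inv_cos {x : ℝ} (hx : cos x ≠ 0) :
    HasDerivAt (fun y => (cos y)⁻¹) ((cos x)⁻¹ * tan x) x := by
  refine ((hasDerivAt_cos x).inv hx).congr_deriv ?_
  rw [tan_eq_sin_div_cos]
  field_simp

theorem hasDerivAt_tan_one_add_sq {x : ℝ} (hx : cos x ≠ 0) :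
    HasDerivAt tan (1 + tan x ^ 2) x := by
  refine (hasDerivAt_tan hx).congr_deriv ?_
  rw [tan_eq_sin_div_cos]
  field_simp
  linear_combination -sin_sq_add_cos_sq x

theorem hasDerivAt_inv_cos_mul_eval_tan (P : ℝ[X]) {x : ℝ} (hx : cos x ≠ 0) :
    HasDerivAt (fun y => (cos y)⁻¹ * P.eval (tan y))
      ((cos x)⁻¹ * ((1 + X ^ 2) * derivative P + X * P).eval (tan x)) x := by
  refine ((hasDerivAt_inv_cos hx).mul
    ((P.hasDerivAt (tan x)).comp x (hasDerivAt_tan_one_add_sq hx))).congr_deriv ?_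
  simp only [Function.comp_apply, eval_add, eval_mul, eval_one, eval_pow, eval_X]
  ring

theorem iteratedDeriv_sec (n : ℕ) (x : ℝ) (hx : Real.cos x ≠ 0) :
    deriv^[n] (fun y => (Real.cos y)⁻¹) x =
      (Real.cos x)⁻¹ * (Q n).eval (Real.tan x) := by
  induction n generalizing x with
  | zero => simp [Q]
  | succ n ih =>
    have hQ : deriv^[n] (fun y => (cos y)⁻¹) =ᶠ[nhds x]
        fun y => (cos y)⁻¹ * (Q n).eval (tan y) :=
      (continuous_cos.continuousAt.eventually_ne hx).mono fun y hy => ih y hy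
    rw [Function.iterate_succ_apply', hQ.deriv_eq,
      (hasDerivAt_inv_cos_mul_eval_tan (Q n) hx).deriv, Q]
end
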